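/- Let S be the unique formal power series over ℚ with zero constant term satisfying S = t(1+2S)(1+S), and set R = S + t(1+S), Q = (2−2t)S − t, D = S + S²/(1−R). Then S² = D·Q·(1−R) as formal power series; equivalently, S²·R^k/(1−R) = D·Q·R^k for all k ≥ 0. -/

import Mathlib

/-!
Since `1 - R + S = 1 - t(1 + S)`, the functional equation of `S` is equivalent to
`Q · (1 - R + S) = S`. Clearing the denominator in `D` gives `D · (1 - R) = S · (1 - R + S)`,
hence `D · Q · (1 - R) = S²`; the second identity follows on multiplying by `Rᵏ / (1 - R)`.
-/

theorem mul_one_sub_mul_one_add_eq_self {A : Type*} [CommRing A] {x s : A}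
    (hs : s = x * (1 + 2 * s) * (1 + s)) :
    ((2 - 2 * x) * s - x) * (1 - x * (1 + s)) = s := by
  linear_combination (1 - x) * hs

open PowerSeries in
theorem sq_S_eq_D_Q (S R Q D : PowerSeries ℚ)
    (hS0 : constantCoeff S = 0)
    (hS : S = X * (1 + 2 * S) * (1 + S))
    (hR : R = S + X * (1 + S))
    (hQ : Q = (2 - 2 * X) * S - X)
    (hD : D = S + S ^ 2 * (1 - R)⁻¹) :
    S ^ 2 = D * Q * (1 - R) ∧
    ∀ k : ℕ, S ^ 2 * R ^ k * (1 - R)⁻¹ = D * Q * R ^ k := by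
  have hinv : (1 - R) * (1 - R)⁻¹ = 1 :=
    PowerSeries.mul_inv_cancel _ (by simp [hR, hS0])
  have hQS : Q * (1 - R + S) = S := by
    rw [hQ, hR]
    linear_combination mul_one_sub_mul_one_add_eq_self hS
  have hDQ : S ^ 2 = D * Q * (1 - R) := by
    rw [hD]
    linear_combination (-S) * hQS - S ^ 2 * Q * hinv
  refine ⟨hDQ, fun k => ?_⟩
  linear_combination R ^ k * (1 - R)⁻¹ * hDQ + D * Q * R ^ k * hinv
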